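/- Let τ be a Rajchman probability measure on P(R²) ≅ R/Z, i.e. its Fourier coefficients τ̂(m) = ∫ e^{2πimx} dτ(x) tend to 0 as |m| → ∞. Then τ is non-concentrated on arithmetic sequences: for every δ > 0 there exist l, k₀ ∈ N such that for all k > k₀, τ(⋃_{0 ≤ n < q^k} B(n/q^k, 1/q^{k+l})) ≤ δ. Moreover one can choose l with 10 < q^l δ ≤ 10q and k₀ such that |τ̂(j q^{k₀})| ≤ δ³/(10⁴ q²) for all j ≠ 0. -/

import Mathlib

/- STATEMENT 19: Let τ be a Rajchman probability measure on P(ℝ²) ≅ ℝ/ℤ, i.e.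
τ̂(m) = ∫ e^{2πimx} dτ(x) → 0 as |m| → ∞.  Then τ is non-concentrated on
arithmetic sequences: for every δ > 0 there exist l, k₀ ∈ ℕ such that for all
k > k₀, τ(⋃_{0 ≤ n < q^k} B(n/q^k, 1/q^{k+l})) ≤ δ.  Moreover (when δ ≤ 10q, as
needed for such an l to exist) one can choose l with 10 < q^l δ ≤ 10q and k₀
with |τ̂(j q^{k₀})| ≤ δ³/(10⁴q²) for all j ≠ 0. -/

open MeasureTheory
open scoped ENNReal Real
noncomputable section

/-- The `m`-th Fourier coefficient of a measure on `ℝ/ℤ`. -/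
def mhat (τ : Measure (AddCircle (1 : ℝ))) (m : ℤ) : ℂ :=
  ∫ x : AddCircle (1 : ℝ), fourier m x ∂τ

/-! Write `E` for the union of balls and `D(x) = ∑_{j<N} e(j q^k x)` with `N = ⌊q^l / 2⌋`.
On `E` the point `q^k x` lies within `q^{-l} ≤ 1/(2N)` of `0` in `ℝ/ℤ`, so by Jordan's inequality
the Dirichlet kernel gives `|D(x)| ≥ 2N/π`. On the other hand
`∫ |D|² dτ = ∑_{j,j'} τ̂((j - j') q^k) ≤ N + N² η` as soon as `|τ̂(m q^k)| ≤ η` for `m ≠ 0`,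
which the Rajchman property provides for all large `k`. Chebyshev's inequality then bounds `τ(E)`
by `π²/(4N) + π²η/4`, which is at most `δ` once `q^l δ > 10` and `η ≤ δ/10`. -/

open Complex Filter Finset Topology

theorem exists_pow_mul_mem_Ioc {q a δ : ℝ} (hq : 1 < q) (hδ : 0 < δ) (hδa : δ ≤ a * q) :
    ∃ l : ℕ, a < q ^ l * δ ∧ q ^ l * δ ≤ a * q := by
  obtain ⟨l, hle, hlt⟩ := exists_nat_pow_near ((one_le_div hδ).2 hδa) hq
  refine ⟨l, ?_, (le_div_iff₀ hδ).1 hle⟩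
  rw [div_lt_iff₀ hδ, pow_succ, mul_right_comm] at hlt
  exact lt_of_mul_lt_mul_right hlt (by positivity)

theorem Filter.Tendsto.eventually_forall_norm_mul_pow_le {E : Type*} [SeminormedAddCommGroup E]
    {f : ℤ → E} (hf : Tendsto f cofinite (𝓝 0)) {q : ℤ} (hq : 1 < q) {η : ℝ} (hη : 0 < η) :
    ∀ᶠ k : ℕ in atTop, ∀ j : ℤ, j ≠ 0 → ‖f (j * q ^ k)‖ ≤ η := by
  have hsmall : ∀ᶠ m in cofinite, ‖f m‖ ≤ η := by
    simpa using hf.eventually (Metric.closedBall_mem_nhds 0 hη)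
  rw [Int.cofinite_eq, eventually_sup, eventually_atBot, eventually_atTop] at hsmall
  obtain ⟨⟨B, hB⟩, ⟨A, hA⟩⟩ := hsmall
  filter_upwards [(tendsto_pow_atTop_atTop_of_one_lt hq).eventually_ge_atTop (max A (-B))]
    with k hk j hj
  have hqk : 0 ≤ q ^ k := by positivity
  rcases hj.lt_or_gt with hneg | hpos
  · exact hB _ (by nlinarith [le_max_right A (-B)])
  · exact hA _ (by nlinarith [le_max_left A (-B)])

theorem two_mul_div_pi_le_norm_geom_sum_exp {N : ℕ} (hN : 0 < N) {θ : ℝ}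
    (hθ : |θ| ≤ 1 / (2 * N)) :
    2 * N / π ≤ ‖∑ j ∈ range N, exp (I * (2 * π * θ : ℝ)) ^ j‖ := by
  have hNpos : (0 : ℝ) < N := by exact_mod_cast hN
  have hNθ : N * |θ| ≤ 1 / 2 := by
    rw [le_div_iff₀ (by positivity)] at hθ; linarith
  rcases eq_or_ne θ 0 with rfl | hθ0
  · simp only [mul_zero, ofReal_zero, exp_zero, one_pow, sum_const, card_range, nsmul_eq_mul,
      mul_one, norm_natCast]
    rw [div_le_iff₀ Real.pi_pos]
    nlinarith [Real.pi_gt_three]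
  set z := exp (I * (2 * π * θ : ℝ))
  -- Jordan's inequality for `sin (π N θ)`, the numerator of the Dirichlet kernel
  have hnum : 4 * N * |θ| ≤ ‖z ^ N - 1‖ := by
    have hx : |2 * π * (N * θ) / 2| = π * (N * |θ|) := by
      rw [mul_assoc, mul_div_cancel_left₀ _ two_ne_zero, abs_mul, abs_mul, abs_of_pos Real.pi_pos,
        Nat.abs_cast]
    have hsin := Real.mul_abs_le_abs_sin (x := 2 * π * (N * θ) / 2)
      (by rw [hx]; nlinarith [Real.pi_pos])
    rw [hx, ← mul_assoc, ← mul_assoc, div_mul_cancel₀ _ Real.pi_pos.ne'] at hsin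
    rw [← exp_nat_mul, show (N : ℂ) * (I * (2 * π * θ : ℝ)) = I * (2 * π * (N * θ) : ℝ) by
      push_cast; ring, norm_exp_I_mul_ofReal_sub_one, norm_mul, Real.norm_eq_abs,
      Real.norm_eq_abs, abs_two]
    linarith
  have hden : ‖z - 1‖ ≤ 2 * π * |θ| := by
    refine Real.norm_exp_I_mul_ofReal_sub_one_le.trans_eq ?_
    rw [Real.norm_eq_abs, abs_mul, abs_of_pos (by positivity)]
  have hprod : ‖z ^ N - 1‖ = ‖∑ j ∈ range N, z ^ j‖ * ‖z - 1‖ := by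
    rw [← norm_mul, geom_sum_mul]
  have hθpos : 0 < |θ| := abs_pos.2 hθ0
  rw [div_le_iff₀ Real.pi_pos]
  nlinarith [norm_nonneg (∑ j ∈ range N, z ^ j), mul_le_mul_of_nonneg_left hden
    (norm_nonneg (∑ j ∈ range N, z ^ j))]

theorem UnitAddCircle.exists_coe_eq_and_abs_eq_norm (y : AddCircle (1 : ℝ)) :
    ∃ θ : ℝ, (θ : AddCircle (1 : ℝ)) = y ∧ |θ| = ‖y‖ := by
  obtain ⟨a, rfl⟩ := QuotientAddGroup.mk_surjective y
  refine ⟨a - round a, ?_, ?_⟩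
  · rw [AddCircle.coe_sub, sub_eq_self, AddCircle.coe_eq_zero_iff]
    exact ⟨round a, by simp⟩
  · exact (UnitAddCircle.norm_eq).symm

theorem UnitAddCircle.two_mul_div_pi_le_norm_sum_fourier {N : ℕ} (hN : 0 < N)
    {y : AddCircle (1 : ℝ)} (hy : ‖y‖ ≤ 1 / (2 * N)) :
    2 * N / π ≤ ‖∑ j ∈ range N, fourier (j : ℤ) y‖ := by
  obtain ⟨θ, rfl, hθ⟩ := UnitAddCircle.exists_coe_eq_and_abs_eq_norm y
  have hfourier : ∀ j : ℕ, fourier (j : ℤ) (θ : AddCircle (1 : ℝ)) =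
      exp (I * (2 * π * θ : ℝ)) ^ j := by
    intro j
    rw [fourier_coe_apply, ← Complex.exp_nat_mul]
    push_cast
    ring_nf
  simp_rw [hfourier]
  exact two_mul_div_pi_le_norm_geom_sum_exp hN (hθ ▸ hy)

theorem UnitAddCircle.norm_nsmul_le_of_mem_ball {M n : ℕ} {x : AddCircle (1 : ℝ)} {r : ℝ}
    (hx : x ∈ Metric.ball (((n : ℝ) / M : ℝ) : AddCircle (1 : ℝ)) r) : ‖M • x‖ ≤ M * r := by
  rcases eq_or_ne M 0 with rfl | hM
  · simp
  have hcenter : M • ((((n : ℝ) / M : ℝ)) : AddCircle (1 : ℝ)) = 0 := by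
    rw [← AddCircle.coe_nsmul, nsmul_eq_mul, mul_div_cancel₀ _ (by exact_mod_cast hM),
      AddCircle.coe_eq_zero_iff]
    exact ⟨n, by simp⟩
  calc ‖M • x‖ = ‖M • (x - ((n : ℝ) / M : ℝ))‖ := by rw [nsmul_sub, hcenter, sub_zero]
    _ ≤ M * ‖x - ((n : ℝ) / M : ℝ)‖ := norm_nsmul_le
    _ ≤ M * r := by
      gcongr
      exact (mem_ball_iff_norm.1 hx).le

theorem fourier_mul_natCast_apply {T : ℝ} (m : ℤ) (a : ℕ) (x : AddCircle T) :
    fourier (m * a) x = fourier m (a • x) := by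
  rw [fourier_apply, fourier_apply, mul_zsmul, natCast_zsmul]

theorem mhat_zero (τ : Measure (AddCircle (1 : ℝ))) [IsProbabilityMeasure τ] : mhat τ 0 = 1 := by
  simp [mhat]

theorem integral_norm_sum_fourier_mul_sq_le (τ : Measure (AddCircle (1 : ℝ)))
    [IsProbabilityMeasure τ] (a : ℤ) (N : ℕ) {η : ℝ}
    (hη : ∀ m : ℤ, m ≠ 0 → ‖mhat τ (m * a)‖ ≤ η) :
    ∫ x, ‖∑ j ∈ range N, fourier ((j : ℤ) * a) x‖ ^ 2 ∂τ ≤ N + N ^ 2 * η := by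
  have hη0 : 0 ≤ η := (norm_nonneg _).trans (hη 1 one_ne_zero)
  have hintegrable : ∀ m : ℤ, Integrable (fun x => fourier m x) τ := fun m =>
    (BoundedContinuousFunction.mkOfCompact (fourier m)).integrable τ
  have hsq : ∀ x : AddCircle (1 : ℝ), ((‖∑ j ∈ range N, fourier ((j : ℤ) * a) x‖ ^ 2 : ℝ) : ℂ) =
      ∑ j ∈ range N, ∑ j' ∈ range N, fourier (((j : ℤ) - j') * a) x := by
    intro x
    rw [ofReal_pow, ← Complex.mul_conj', map_sum, sum_mul_sum]
    refine sum_congr rfl fun j _ => sum_congr rfl fun j' _ => ?_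
    rw [← fourier_neg, ← fourier_add, sub_mul, sub_eq_add_neg]
  have hcoeff : ((∫ x, ‖∑ j ∈ range N, fourier ((j : ℤ) * a) x‖ ^ 2 ∂τ : ℝ) : ℂ) =
      ∑ j ∈ range N, ∑ j' ∈ range N, mhat τ (((j : ℤ) - j') * a) := by
    rw [← integral_complex_ofReal]
    simp_rw [hsq]
    rw [integral_finsetSum _ fun j _ => integrable_finsetSum _ fun j' _ => hintegrable _]
    exact sum_congr rfl fun j _ => integral_finsetSum _ fun j' _ => hintegrable _
  have hentry : ∀ j j' : ℕ,
      ‖mhat τ (((j : ℤ) - j') * a)‖ ≤ (if j = j' then 1 else 0) + η := by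
    intro j j'
    split_ifs with hjj
    · simp [hjj, mhat_zero, hη0]
    · simpa using hη _ (sub_ne_zero.2 (by exact_mod_cast hjj))
  calc ∫ x, ‖∑ j ∈ range N, fourier ((j : ℤ) * a) x‖ ^ 2 ∂τ
      ≤ ‖((∫ x, ‖∑ j ∈ range N, fourier ((j : ℤ) * a) x‖ ^ 2 ∂τ : ℝ) : ℂ)‖ := by
        rw [Complex.norm_real]; exact Real.le_norm_self _
    _ ≤ ∑ j ∈ range N, ∑ j' ∈ range N, ‖mhat τ (((j : ℤ) - j') * a)‖ := by
        rw [hcoeff]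
        exact (norm_sum_le _ _).trans (sum_le_sum fun j _ => norm_sum_le _ _)
    _ ≤ ∑ j ∈ range N, ∑ j' ∈ range N, ((if j = j' then 1 else 0) + η) :=
        sum_le_sum fun j _ => sum_le_sum fun j' _ => hentry j j'
    _ = N + N ^ 2 * η := by
        simp only [sum_add_distrib, sum_ite_eq, mem_range, sum_const, card_range, nsmul_eq_mul,
          sum_boole, filter_true_of_mem fun j hj => mem_range.1 hj, add_right_inj]
        ring

theorem measureReal_le_of_le_norm_sum_fourier_mul (τ : Measure (AddCircle (1 : ℝ)))
    [IsProbabilityMeasure τ] (a : ℤ) (N : ℕ) {η : ℝ}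
    (hη : ∀ m : ℤ, m ≠ 0 → ‖mhat τ (m * a)‖ ≤ η) {s : Set (AddCircle (1 : ℝ))} {c : ℝ}
    (hc : 0 < c) (hs : ∀ x ∈ s, c ≤ ‖∑ j ∈ range N, fourier ((j : ℤ) * a) x‖) :
    τ.real s ≤ (N + N ^ 2 * η) / c ^ 2 := by
  set g := fun x => ‖∑ j ∈ range N, fourier ((j : ℤ) * a) x‖ ^ 2
  have hg : Integrable g τ :=
    (BoundedContinuousFunction.mkOfCompact ⟨g, by fun_prop⟩).integrable τ
  have hchebyshev := mul_meas_ge_le_integral_of_nonneg (ae_of_all _ fun x => by positivity) hg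
    (c ^ 2)
  rw [le_div_iff₀ (by positivity), mul_comm]
  calc c ^ 2 * τ.real s ≤ c ^ 2 * τ.real {x | c ^ 2 ≤ g x} := by
        gcongr
        · finiteness
        · exact fun x hx => pow_le_pow_left₀ hc.le (hs x hx) 2
    _ ≤ ∫ x, g x ∂τ := hchebyshev
    _ ≤ N + N ^ 2 * η := integral_norm_sum_fourier_mul_sq_le τ a N hη

theorem measure_iUnion_ball_le_of_norm_mhat_le {q : ℕ} (τ : Measure (AddCircle (1 : ℝ)))
    [IsProbabilityMeasure τ] {l k : ℕ} {δ : ℝ} (hδ : 0 < δ) (hl : 10 < (q : ℝ) ^ l * δ)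
    (hk : ∀ j : ℤ, j ≠ 0 → ‖mhat τ (j * (q : ℤ) ^ k)‖ ≤ δ / 10) :
    τ (⋃ n ∈ Finset.range (q ^ k),
        Metric.ball (((n : ℝ) / (q : ℝ) ^ k : ℝ) : AddCircle (1 : ℝ)) (1 / (q : ℝ) ^ (k + l)))
      ≤ ENNReal.ofReal δ := by
  rcases le_or_gt 1 δ with hδ1 | hδ1
  · exact prob_le_one.trans (ENNReal.one_le_ofReal.2 hδ1)
  -- `N` is the largest length for which the Dirichlet kernel stays large on all the balls
  set N := q ^ l / 2
  have h2N : 2 * (N : ℝ) ≤ (q : ℝ) ^ l := by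
    exact_mod_cast (by omega : 2 * N ≤ q ^ l)
  have hδN : 9 ≤ 2 * δ * N := by
    have : ((q ^ l : ℕ) : ℝ) ≤ 2 * N + 1 := by exact_mod_cast (by omega : q ^ l ≤ 2 * N + 1)
    push_cast at this
    nlinarith
  have hNpos : (0 : ℝ) < N := by nlinarith
  have hlarge : ∀ x ∈ ⋃ n ∈ Finset.range (q ^ k),
      Metric.ball (((n : ℝ) / (q : ℝ) ^ k : ℝ) : AddCircle (1 : ℝ)) (1 / (q : ℝ) ^ (k + l)),
      2 * N / π ≤ ‖∑ j ∈ range N, fourier ((j : ℤ) * (q : ℤ) ^ k) x‖ := by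
    simp only [Set.mem_iUnion]
    rintro x ⟨n, hn, hx⟩
    have hqk : (0 : ℝ) < (q : ℝ) ^ k := by
      exact_mod_cast (Nat.zero_le n).trans_lt (Finset.mem_range.1 hn)
    simp_rw [← Nat.cast_pow, fourier_mul_natCast_apply]
    refine UnitAddCircle.two_mul_div_pi_le_norm_sum_fourier (by exact_mod_cast hNpos) ?_
    calc ‖(q ^ k) • x‖ ≤ ((q ^ k : ℕ) : ℝ) * (1 / (q : ℝ) ^ (k + l)) :=
          UnitAddCircle.norm_nsmul_le_of_mem_ball (n := n) (by rwa [Nat.cast_pow])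
      _ = 1 / (q : ℝ) ^ l := by push_cast; rw [pow_add]; field_simp
      _ ≤ 1 / (2 * N) := by gcongr
  rw [← ENNReal.ofReal_toReal (measure_ne_top τ _)]
  refine ENNReal.ofReal_le_ofReal ((measureReal_le_of_le_norm_sum_fourier_mul τ _ N hk
    (by positivity) hlarge).trans ?_)
  have hπ : π ^ 2 ≤ 10 := by nlinarith [Real.pi_lt_d2, Real.pi_pos]
  calc ((N : ℝ) + N ^ 2 * (δ / 10)) / (2 * N / π) ^ 2
      ≤ ((N : ℝ) + N ^ 2 * (δ / 10)) / (4 * N ^ 2 / 10) := by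
        gcongr
        rw [div_pow, le_div_iff₀ (by positivity)]
        nlinarith
    _ ≤ δ := by
        rw [div_le_iff₀ (by positivity)]
        nlinarith

theorem rajchman_implies_nonconcentration_on_arithmetic_sequences
    (q : ℕ) (hq : 1 < q)
    (τ : Measure (AddCircle (1 : ℝ))) [IsProbabilityMeasure τ]
    -- τ is a Rajchman measure: τ̂(m) → 0 as |m| → ∞
    (hraj : Filter.Tendsto (fun m : ℤ => mhat τ m) Filter.cofinite (nhds 0))
    (δ : ℝ) (hδ : 0 < δ) :
    (∃ l k₀ : ℕ, ∀ k : ℕ, k₀ < k →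
      τ (⋃ n ∈ Finset.range (q ^ k),
          Metric.ball (((n : ℝ) / (q : ℝ) ^ k : ℝ) : AddCircle (1 : ℝ))
            (1 / (q : ℝ) ^ (k + l)))
        ≤ ENNReal.ofReal δ) ∧
    (δ ≤ 10 * q →
      ∃ l k₀ : ℕ,
        (10 < (q : ℝ) ^ l * δ ∧ (q : ℝ) ^ l * δ ≤ 10 * q) ∧
        (∀ j : ℤ, j ≠ 0 → ‖mhat τ (j * (q : ℤ) ^ k₀)‖ ≤ δ ^ 3 / (10 ^ 4 * (q : ℝ) ^ 2)) ∧
        ∀ k : ℕ, k₀ < k →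
          τ (⋃ n ∈ Finset.range (q ^ k),
              Metric.ball (((n : ℝ) / (q : ℝ) ^ k : ℝ) : AddCircle (1 : ℝ))
                (1 / (q : ℝ) ^ (k + l)))
            ≤ ENNReal.ofReal δ) := by
  obtain ⟨k₀, hk₀⟩ := eventually_atTop.1 <|
    hraj.eventually_forall_norm_mul_pow_le (q := q) (by exact_mod_cast hq)
      (η := δ ^ 3 / (10 ^ 4 * (q : ℝ) ^ 2)) (by positivity)
  refine (fun hsecond => ⟨?first, hsecond⟩) fun hδq => ?second
  case first =>
    by_cases hδq : δ ≤ 10 * q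
    · obtain ⟨l, k₀, -, -, h⟩ := hsecond hδq
      exact ⟨l, k₀, h⟩
    · refine ⟨0, 0, fun k _ => prob_le_one.trans (ENNReal.one_le_ofReal.2 ?_)⟩
      have : (1 : ℝ) ≤ q := by exact_mod_cast hq.le
      linarith
  case second =>
    obtain ⟨l, hl⟩ := exists_pow_mul_mem_Ioc (a := 10) (q := (q : ℝ)) (by exact_mod_cast hq) hδ hδq
    have hη : δ ^ 3 / (10 ^ 4 * (q : ℝ) ^ 2) ≤ δ / 10 := by
      rw [div_le_div_iff₀ (by positivity) (by norm_num)]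
      nlinarith [mul_le_mul hδq hδq hδ.le (by positivity)]
    exact ⟨l, k₀, hl, hk₀ k₀ le_rfl, fun k hk => measure_iUnion_ball_le_of_norm_mhat_le τ hδ hl.1
      fun j hj => (hk₀ k hk.le j hj).trans hη⟩
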